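/- arXiv:1711.06197 — 2 statements merged into one kernel-verified Lean document; each statement's English description precedes it below -/
import Mathlib

section
/- For the Sibuya distribution with parameter 0 < α < 1, the probability that the sum of k independent Sibuya waiting times equals n is b(n,k) = (-1)^n ∑_{ℓ=0}^k (-1)^ℓ binom(k,ℓ) binom(ℓα, n). -/
/-!
The generating function of the Sibuya law is `1 - (1 - z)^α`. By independence, the generating
function of `W₁ + ⋯ + W_k` is its `k`-th power, which the binomial theorem expands as
`∑ ℓ, (-1)^ℓ (k choose ℓ) (1 - z)^(ℓα)`, and the coefficient of `z^n` in `(1 - z)^x` is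
`(-1)^n binom(x, n)`. Working with formal power series, no convergence question arises.
-/

open MeasureTheory

noncomputable def gchoose (x : ℝ) (n : ℕ) : ℝ :=
  (∏ j ∈ Finset.range n, (x - (j : ℝ))) / (n.factorial : ℝ)

open Finset PowerSeries

theorem gchoose_eq_ringChoose (x : ℝ) (n : ℕ) : gchoose x n = Ring.choose x n := by
  rw [Ring.choose_eq_smul, gchoose, ← descPochhammer_eval_eq_prod_range,
    ← descPochhammer_map (algebraMap ℤ ℝ), Polynomial.eval_map_algebraMap,
    Polynomial.aeval_eq_smeval, smul_eq_mul, div_eq_inv_mul]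

theorem gchoose_succ (x : ℝ) (n : ℕ) :
    gchoose x (n + 1) = gchoose x n * (x - n) / (n + 1) := by
  rw [gchoose, gchoose, prod_range_succ, Nat.factorial_succ]
  push_cast
  field_simp

namespace PowerSeries

theorem binomialSeries_nsmul {R A : Type*} [CommRing R] [BinomialRing R] [Ring A]
    [Algebra R A] (r : R) (n : ℕ) : binomialSeries A (n • r) = binomialSeries A r ^ n := by
  induction n with
  | zero => simp
  | succ n ih => rw [succ_nsmul, binomialSeries_add, ih, pow_succ]

theorem coeff_one_sub_pow {R : Type*} [CommRing R] (f : R⟦X⟧) (k n : ℕ) :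
    coeff n ((1 - f) ^ k) = ∑ ℓ ∈ range (k + 1), (-1) ^ ℓ * k.choose ℓ * coeff n (f ^ ℓ) := by
  rw [← neg_add_eq_sub, add_pow, map_sum]
  refine sum_congr rfl fun ℓ _ => ?_
  have hterm : (-f) ^ ℓ * 1 ^ (k - ℓ) * (k.choose ℓ : R⟦X⟧) =
      C ((-1) ^ ℓ * (k.choose ℓ : R)) * f ^ ℓ := by
    rw [neg_pow, one_pow, mul_one, map_mul, map_pow, map_neg, map_one, map_natCast]
    ring
  rw [hterm, coeff_C_mul]

theorem coeff_rescale_neg_one_binomialSeries_pow (a : ℝ) (ℓ n : ℕ) :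
    coeff n (rescale (-1) (binomialSeries ℝ a) ^ ℓ) = (-1) ^ n * gchoose (ℓ * a) n := by
  rw [← map_pow, ← binomialSeries_nsmul, coeff_rescale, binomialSeries_coeff, nsmul_eq_mul,
    gchoose_eq_ringChoose, smul_eq_mul, mul_one]

end PowerSeries

noncomputable def sibuyaMass (α : ℝ) (m : ℕ) : ℝ :=
  if m = 0 then 0 else (α / m) * ∏ ℓ ∈ Icc 1 (m - 1), (1 - α / (ℓ : ℝ))

theorem sibuyaMass_nonneg {α : ℝ} (h0 : 0 ≤ α) (h1 : α ≤ 1) (m : ℕ) : 0 ≤ sibuyaMass α m := by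
  unfold sibuyaMass
  split_ifs
  · rfl
  · refine mul_nonneg (by positivity) (prod_nonneg fun ℓ hℓ => ?_)
    have hℓ : (1 : ℝ) ≤ ℓ := by exact_mod_cast (mem_Icc.mp hℓ).1
    rw [sub_nonneg, div_le_one (by linarith)]
    linarith

theorem sibuyaMass_succ (α : ℝ) (m : ℕ) :
    sibuyaMass α (m + 1) = -((-1) ^ (m + 1) * gchoose α (m + 1)) := by
  induction m with
  | zero => simp [sibuyaMass, gchoose]
  | succ m ih =>
    simp only [sibuyaMass, Nat.add_one_ne_zero, if_false, Nat.add_sub_cancel] at ih ⊢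
    rw [prod_Icc_succ_top (by omega), gchoose_succ, pow_succ]
    -- both sides get the factor `(m + 1 - α) / (m + 2)` in the step from `m + 1` to `m + 2`
    linear_combination (norm := skip) (-(α - (m + 1 : ℕ)) / ((m : ℝ) + 2)) * ih
    push_cast
    field_simp
    ring

theorem mk_sibuyaMass (α : ℝ) :
    mk (sibuyaMass α) = 1 - rescale (-1) (binomialSeries ℝ α) := by
  ext m
  rw [coeff_mk, map_sub, coeff_one, coeff_rescale, binomialSeries_coeff, ← gchoose_eq_ringChoose]
  cases m with
  | zero => simp [sibuyaMass, gchoose]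
  | succ m => simp [sibuyaMass_succ]

namespace ProbabilityTheory

variable {Ω : Type*} [MeasurableSpace Ω] {μ : Measure Ω}

noncomputable def pgfSeries (μ : Measure Ω) (X : Ω → ℕ) : ℝ⟦X⟧ :=
  mk fun n => μ.real {ω | X ω = n}

@[simp]
theorem coeff_pgfSeries (X : Ω → ℕ) (n : ℕ) : coeff n (pgfSeries μ X) = μ.real {ω | X ω = n} :=
  coeff_mk _ _

theorem pgfSeries_zero [IsProbabilityMeasure μ] : pgfSeries μ 0 = 1 := by
  ext (_ | n) <;> simp [coeff_one]

theorem IndepFun.pgfSeries_add [IsFiniteMeasure μ] {X Y : Ω → ℕ} (hXY : IndepFun X Y μ)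
    (hX : Measurable X) (hY : Measurable Y) :
    pgfSeries μ (X + Y) = pgfSeries μ X * pgfSeries μ Y := by
  ext n
  have hsplit : {ω | (X + Y) ω = n} = ⋃ p ∈ antidiagonal n, X ⁻¹' {p.1} ∩ Y ⁻¹' {p.2} := by
    ext ω; simp
  rw [coeff_mul, coeff_pgfSeries, hsplit, measureReal_biUnion_finset]
  · refine sum_congr rfl fun p _ => ?_
    rw [measureReal_def, hXY.measure_inter_preimage_eq_mul _ _ (measurableSet_singleton _)
      (measurableSet_singleton _), ENNReal.toReal_mul, coeff_pgfSeries, coeff_pgfSeries]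
    rfl
  · intro p _ q _ hpq
    refine Set.disjoint_left.mpr fun ω hp hq => hpq ?_
    simp_all [Prod.ext_iff]
  · exact fun p _ => (hX (measurableSet_singleton _)).inter (hY (measurableSet_singleton _))

theorem iIndepFun.pgfSeries_sum [IsProbabilityMeasure μ] {ι : Type*} {W : ι → Ω → ℕ}
    (hW : iIndepFun W μ) (hmeas : ∀ i, Measurable (W i)) (s : Finset ι) :
    pgfSeries μ (∑ i ∈ s, W i) = ∏ i ∈ s, pgfSeries μ (W i) := by
  classical
  induction s using Finset.induction_on with
  | empty => simp [pgfSeries_zero]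
  | insert i s hi ih =>
    rw [sum_insert hi, prod_insert hi, add_comm, IndepFun.pgfSeries_add, ih, mul_comm]
    · exact hW.indepFun_finsetSum_of_notMem hmeas hi
    · rw [Finset.sum_fn]; exact Finset.measurable_sum _ fun j _ => hmeas j
    · exact hmeas i

end ProbabilityTheory

open ProbabilityTheory

theorem sibuya_k_fold_sum_distribution_general
    (α : ℝ) (hα0 : 0 < α) (hα1 : α < 1)
    {Ω : Type*} [MeasurableSpace Ω] (μ : Measure Ω) [IsProbabilityMeasure μ]
    (W : ℕ → Ω → ℕ) (hmeas : ∀ i, Measurable (W i))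
    (hindep : ProbabilityTheory.iIndepFun W μ)
    (hdist : ∀ i m, μ {ω | W i ω = m} = ENNReal.ofReal
      (if m = 0 then 0 else (α / m) * ∏ ℓ ∈ Finset.Icc 1 (m - 1), (1 - α / (ℓ : ℝ))))
    (k : ℕ) (n : ℕ) :
    (μ {ω | ∑ i ∈ Finset.range k, W i ω = n}).toReal =
      (-1 : ℝ) ^ n * ∑ ℓ ∈ Finset.range (k + 1),
        (-1 : ℝ) ^ ℓ * (k.choose ℓ : ℝ) * gchoose ((ℓ : ℝ) * α) n := by
  have hlaw : ∀ i, pgfSeries μ (W i) = mk (sibuyaMass α) := fun i => by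
    ext m
    rw [coeff_pgfSeries, coeff_mk, measureReal_def, hdist i m]
    exact ENNReal.toReal_ofReal (sibuyaMass_nonneg hα0.le hα1.le m)
  have hsum : pgfSeries μ (∑ i ∈ range k, W i) = (1 - rescale (-1) (binomialSeries ℝ α)) ^ k := by
    rw [hindep.pgfSeries_sum hmeas, prod_congr rfl fun i _ => hlaw i, prod_const, card_range,
      mk_sibuyaMass]
  have hcoeff := congrArg (coeff n) hsum
  rw [coeff_pgfSeries, coeff_one_sub_pow] at hcoeff
  simp only [Finset.sum_apply, coeff_rescale_neg_one_binomialSeries_pow] at hcoeff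
  rw [← measureReal_def, hcoeff, mul_sum]
  exact sum_congr rfl fun ℓ _ => by ring

/-- For the Sibuya distribution with parameter `0 < α < 1`, the probability
that the sum of `k` independent Sibuya waiting times equals `n` is
`b(n,k) = (-1)^n ∑_{ℓ=0}^k (-1)^ℓ binom(k,ℓ) binom(ℓα, n)`. -/
theorem sibuya_k_fold_sum_distribution
    (α : ℝ) (hα0 : 0 < α) (hα1 : α < 1)
    {Ω : Type*} [MeasurableSpace Ω] (μ : Measure Ω) [IsProbabilityMeasure μ]
    (W : ℕ → Ω → ℕ) (hmeas : ∀ i, Measurable (W i))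
    (hindep : ProbabilityTheory.iIndepFun W μ)
    (hdist : ∀ i m, μ {ω | W i ω = m} = ENNReal.ofReal
      (if m = 0 then 0 else (α / m) * ∏ ℓ ∈ Finset.Icc 1 (m - 1), (1 - α / (ℓ : ℝ))))
    (k : ℕ) (hk : 1 ≤ k) (n : ℕ) :
    (μ {ω | ∑ i ∈ Finset.range k, W i ω = n}).toReal =
      (-1 : ℝ) ^ n * ∑ ℓ ∈ Finset.range (k + 1),
        (-1 : ℝ) ^ ℓ * (k.choose ℓ : ℝ) * gchoose ((ℓ : ℝ) * α) n :=
  sibuya_k_fold_sum_distribution_general α hα0 hα1 μ W hmeas hindep hdist k n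
end

section
/- For each fixed n ∈ ℕ and 0 < α < 1, ∑_{k=0}^∞ (-1)^n ∑_{ℓ=0}^k (-1)^ℓ binom(k,ℓ) binom((ℓ+1)α - 1, n) = 1; that is, the probabilities ℙ[T_k ≤ n < T_{k+1}] sum to 1 over k (the sum is finite since the terms vanish for k > n). -/
open Finset Polynomial
open scoped fwdDiff

section fwdDiff

variable {M G : Type*} [AddCommMonoid M] [AddCommGroup G] (h : M) (f : M → G)

theorem sum_range_neg_one_pow_mul_choose_smul_eq_fwdDiff_iter (k : ℕ) (y : M) :
    ∑ ℓ ∈ range (k + 1), ((-1 : ℤ) ^ ℓ * k.choose ℓ) • f (y + ℓ • h) =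
      (-1 : ℤ) ^ k • Δ_[h] ^[k] f y := by
  rw [fwdDiff_iter_eq_sum_shift, smul_sum]
  refine sum_congr rfl fun ℓ hℓ => ?_
  obtain ⟨m, rfl⟩ := Nat.exists_eq_add_of_le (Nat.lt_succ_iff.mp (mem_range.mp hℓ))
  have hsign : (-1 : ℤ) ^ (ℓ + m) * (-1) ^ m = (-1) ^ ℓ := by
    rw [← pow_add, add_assoc, pow_add, Even.neg_one_pow ⟨m, rfl⟩, mul_one]
  rw [smul_smul, Nat.add_sub_cancel_left, ← mul_assoc, hsign]

theorem sum_range_neg_one_pow_smul_fwdDiff_iter_add_eq {n : ℕ} {y : M}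
    (hf : Δ_[h] ^[n + 1] f y = 0) :
    ∑ k ∈ range (n + 1), (-1 : ℤ) ^ k • Δ_[h] ^[k] f (y + h) = f y := by
  have hstep (k : ℕ) : Δ_[h] ^[k] f (y + h) = Δ_[h] ^[k] f y + Δ_[h] ^[k + 1] f y := by
    rw [Function.iterate_succ_apply', fwdDiff, add_sub_cancel]
  calc ∑ k ∈ range (n + 1), (-1 : ℤ) ^ k • Δ_[h] ^[k] f (y + h)
      = ∑ k ∈ range (n + 1), ((-1 : ℤ) ^ k • Δ_[h] ^[k] f y
          - (-1 : ℤ) ^ (k + 1) • Δ_[h] ^[k + 1] f y) := by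
        refine sum_congr rfl fun k _ => ?_
        rw [hstep, smul_add, pow_succ, mul_neg_one, neg_smul, sub_neg_eq_add]
    _ = f y := by rw [sum_range_sub', hf, smul_zero, sub_zero, pow_zero, one_smul]; rfl

end fwdDiff

theorem gchoose_eq_descPochhammer_eval (x : ℝ) (n : ℕ) :
    gchoose x n = (descPochhammer ℝ n).eval x / n.factorial := by
  rw [gchoose, descPochhammer_eval_eq_prod_range]

theorem gchoose_neg_one (n : ℕ) : gchoose (-1) n = (-1) ^ n := by
  have hfac : ∏ j ∈ range n, (-1 - (j : ℝ)) = (-1) ^ n * n.factorial := by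
    rw [← prod_range_add_one_eq_factorial, Nat.cast_prod, ← card_range n, ← prod_const,
      card_range, ← prod_mul_distrib]
    refine prod_congr rfl fun j _ => ?_
    push_cast
    ring
  rw [gchoose, hfac, mul_div_cancel_right₀ _ (by positivity)]

theorem fwdDiff_iter_gchoose_affine_eq_zero (a b : ℝ) {n k : ℕ} (hk : n < k) :
    Δ_[1] ^[k] (fun x => gchoose (x * a - b) n) = 0 := by
  set P : ℝ[X] := C (n.factorial : ℝ)⁻¹ * (descPochhammer ℝ n).comp (X * C a - C b)
  have hP : (fun x => gchoose (x * a - b) n) = P.eval := by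
    ext x
    simp [P, gchoose_eq_descPochhammer_eval, div_eq_inv_mul, mul_comm a x]
  have hdeg : P.natDegree ≤ n := by
    refine (natDegree_C_mul_le _ _).trans (natDegree_comp_le.trans ?_)
    rw [descPochhammer_natDegree]
    exact mul_le_of_le_one_right n.zero_le (by compute_degree)
  rw [hP]
  exact fwdDiff_iter_eq_zero_of_degree_lt (hdeg.trans_lt hk)

theorem sibuya_jump_probabilities_sum_to_one_general
    (α : ℝ) (n : ℕ) :
    ∑' k : ℕ, ((-1 : ℝ) ^ n * ∑ ℓ ∈ Finset.range (k + 1),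
      (-1 : ℝ) ^ ℓ * (k.choose ℓ : ℝ) * gchoose (((ℓ : ℝ) + 1) * α - 1) n) = 1 := by
  set f : ℝ → ℝ := fun x => gchoose (x * α - 1) n
  have hterm (k : ℕ) : ∑ ℓ ∈ range (k + 1), (-1 : ℝ) ^ ℓ * k.choose ℓ *
      gchoose (((ℓ : ℝ) + 1) * α - 1) n = (-1) ^ k * Δ_[1] ^[k] f 1 := by
    simpa [zsmul_eq_mul, f, add_comm] using
      sum_range_neg_one_pow_mul_choose_smul_eq_fwdDiff_iter 1 f k 1
  have hvanish {k : ℕ} (hk : n < k) : Δ_[1] ^[k] f = 0 :=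
    fwdDiff_iter_gchoose_affine_eq_zero α 1 hk
  have hnewton : ∑ k ∈ range (n + 1), (-1 : ℝ) ^ k * Δ_[1] ^[k] f 1 = (-1) ^ n := by
    simpa [zsmul_eq_mul, f, gchoose_neg_one] using
      sum_range_neg_one_pow_smul_fwdDiff_iter_add_eq 1 f (y := 0)
        (congrFun (hvanish n.lt_succ_self) 0)
  rw [tsum_eq_sum (s := range (n + 1)) fun k hk => by
    rw [hterm, hvanish (by simpa using hk)]; simp]
  simp only [hterm, ← mul_sum]
  rw [hnewton, ← mul_pow, neg_one_mul, neg_neg, one_pow]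

/-- For each fixed `n` and `0 < α < 1`,
`∑_{k=0}^∞ (-1)^n ∑_{ℓ=0}^k (-1)^ℓ binom(k,ℓ) binom((ℓ+1)α - 1, n) = 1`. -/
theorem sibuya_jump_probabilities_sum_to_one
    (α : ℝ) (hα0 : 0 < α) (hα1 : α < 1) (n : ℕ) :
    ∑' k : ℕ, ((-1 : ℝ) ^ n * ∑ ℓ ∈ Finset.range (k + 1),
      (-1 : ℝ) ^ ℓ * (k.choose ℓ : ℝ) * gchoose (((ℓ : ℝ) + 1) * α - 1) n) = 1 :=
  sibuya_jump_probabilities_sum_to_one_general α n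
end
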